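/- The real unit interval [0,1] as a bounded distributive lattice has a meet-complete representation and a join-complete representation, but no complete representation. -/

import Mathlib

section Defs
variable {L : Type} [Lattice L] [BoundedOrder L] {X : Type}

/-- A representation: a bounded lattice embedding into a powerset. -/
def IsRep (h : L → Set X) : Prop :=
  Function.Injective h ∧ (∀ a b : L, h (a ⊓ b) = h a ∩ h b) ∧
    (∀ a b : L, h (a ⊔ b) = h a ∪ h b) ∧ h ⊥ = ∅ ∧ h ⊤ = Set.univ

/-- Meet-complete: existing infima are sent to intersections. -/
def MeetComplete (h : L → Set X) : Prop :=
  ∀ (S : Set L) (x : L), IsGLB S x → h x = ⋂ a ∈ S, h a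

/-- Join-complete: existing suprema are sent to unions. -/
def JoinComplete (h : L → Set X) : Prop :=
  ∀ (S : Set L) (x : L), IsLUB S x → h x = ⋃ a ∈ S, h a

def IsFilter' (F : Set L) : Prop :=
  ⊤ ∈ F ∧ (∀ a b : L, a ∈ F → a ≤ b → b ∈ F) ∧ (∀ a b : L, a ∈ F → b ∈ F → a ⊓ b ∈ F)

def IsPrimeFilter (F : Set L) : Prop :=
  IsFilter' F ∧ ⊥ ∉ F ∧ ∀ a b : L, a ⊔ b ∈ F → a ∈ F ∨ b ∈ F

/-- Complete filter: contains all existing infima of its subsets. -/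
def CompleteFilter (F : Set L) : Prop :=
  ∀ S ⊆ F, ∀ x : L, IsGLB S x → x ∈ F

/-- Completely prime filter: if an existing supremum lies in F then some element does. -/
def CompletelyPrimeFilter (F : Set L) : Prop :=
  ∀ (S : Set L) (x : L), IsLUB S x → x ∈ F → ∃ s ∈ S, s ∈ F

/-- Complete ideal: contains all existing suprema of its subsets. -/
def CompleteIdeal (I : Set L) : Prop :=
  ∀ S ⊆ I, ∀ x : L, IsLUB S x → x ∈ I

/-- Completely prime ideal: if an existing infimum lies in I then some element does. -/
def CompletelyPrimeIdeal (I : Set L) : Prop :=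
  ∀ (S : Set L) (x : L), IsGLB S x → x ∈ I → ∃ s ∈ S, s ∈ I

/-- A distinguishing family of subsets of L. -/
def Distinguishing (K : Set (Set L)) : Prop :=
  ∀ a b : L, a ≠ b → ∃ s ∈ K, (a ∈ s ∧ b ∉ s) ∨ (b ∈ s ∧ a ∉ s)

/-- Ultrafilter: a maximal proper filter. -/
def IsUltrafilter (F : Set L) : Prop :=
  IsFilter' F ∧ ⊥ ∉ F ∧ ∀ G : Set L, IsFilter' G → ⊥ ∉ G → F ⊆ G → F = G

end Defs

/-!
On any bounded chain, `a ↦ {x ∈ (⊥, ⊤] | x ≤ a}` turns existing infima into intersections and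
`a ↦ {x ∈ [⊥, ⊤) | x < a}` turns existing suprema into unions. A representation doing both would
make the point filter `{a | x ∈ h a}` of any point `x` complete and completely prime. In a complete
dense chain no set `F` is both: completeness puts `m = sInf F` in `F`, and since `m` is the
supremum of `Set.Iio m`, complete primeness then puts an element strictly below `m` in `F`.
-/

section Chain

variable {L : Type} [LinearOrder L] [BoundedOrder L]

def ioiRep (a : L) : Set (Set.Ioi (⊥ : L)) := {x | (x : L) ≤ a}

def iioRep (a : L) : Set (Set.Iio (⊤ : L)) := {x | (x : L) < a}

theorem ioiRep_injective : Function.Injective (ioiRep (L := L)) := by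
  have le_of_eq : ∀ a b : L, ioiRep a = ioiRep b → a ≤ b := fun a b hab => not_lt.1 fun hlt => by
    have ha : ⟨a, bot_le.trans_lt hlt⟩ ∈ ioiRep b := hab ▸ le_refl a
    exact (show a ≤ b from ha).not_gt hlt
  exact fun a b hab => le_antisymm (le_of_eq a b hab) (le_of_eq b a hab.symm)

theorem iioRep_injective : Function.Injective (iioRep (L := L)) := by
  have le_of_eq : ∀ a b : L, iioRep a = iioRep b → a ≤ b := fun a b hab => not_lt.1 fun hlt => by
    have hb : ⟨b, hlt.trans_le le_top⟩ ∈ iioRep b := hab ▸ hlt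
    exact lt_irrefl b hb
  exact fun a b hab => le_antisymm (le_of_eq a b hab) (le_of_eq b a hab.symm)

theorem isRep_ioiRep : IsRep (ioiRep (L := L)) := by
  refine ⟨ioiRep_injective, fun a b => ?_, fun a b => ?_, ?_, ?_⟩ <;> ext x <;> simp [ioiRep]
  exact x.2.ne'

theorem isRep_iioRep : IsRep (iioRep (L := L)) := by
  refine ⟨iioRep_injective, fun a b => ?_, fun a b => ?_, ?_, ?_⟩ <;> ext x <;> simp [iioRep]
  exact x.2

theorem meetComplete_ioiRep : MeetComplete (ioiRep (L := L)) :=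
  fun _ _ hS => by ext x; simp [ioiRep, le_isGLB_iff hS, mem_lowerBounds]

theorem joinComplete_iioRep : JoinComplete (iioRep (L := L)) :=
  fun _ _ hS => by ext x; simp [iioRep, lt_isLUB_iff hS]

end Chain

theorem IsRep.nonempty {L : Type} [Lattice L] [BoundedOrder L] [Nontrivial L] {X : Type}
    {h : L → Set X} (hh : IsRep h) : Nonempty X := by
  obtain ⟨hinj, -, -, hbot, htop⟩ := hh
  have : h ⊤ ≠ h ⊥ := hinj.ne top_ne_bot
  rw [hbot, htop] at this
  exact Set.nonempty_iff_univ_nonempty.2 (Set.nonempty_iff_ne_empty.2 this)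

section PointFilter

variable {L : Type} [Lattice L] {X : Type} {h : L → Set X}

theorem MeetComplete.completeFilter_setOf_mem (hh : MeetComplete h) (x : X) :
    CompleteFilter {a | x ∈ h a} := fun S hS m hm => by
  simpa [hh S m hm] using fun a ha => hS ha

theorem JoinComplete.completelyPrimeFilter_setOf_mem (hh : JoinComplete h) (x : X) :
    CompletelyPrimeFilter {a | x ∈ h a} := fun S m hm hx => by
  simpa [hh S m hm] using hx

end PointFilter

theorem not_completeFilter_and_completelyPrimeFilter {L : Type} [CompleteLinearOrder L]
    [DenselyOrdered L] (F : Set L) : ¬ (CompleteFilter F ∧ CompletelyPrimeFilter F) := by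
  rintro ⟨hcomplete, hprime⟩
  have hmF : sInf F ∈ F := hcomplete F le_rfl _ (isGLB_sInf F)
  obtain ⟨a, hlt, haF⟩ := hprime _ _ isLUB_Iio hmF
  exact (sInf_le haF).not_gt hlt

theorem not_exists_isRep_meetComplete_joinComplete {L : Type} [CompleteLinearOrder L]
    [DenselyOrdered L] [Nontrivial L] :
    ¬ ∃ (X : Type) (h : L → Set X), IsRep h ∧ MeetComplete h ∧ JoinComplete h := by
  rintro ⟨X, h, hrep, hmeet, hjoin⟩
  obtain ⟨x⟩ := hrep.nonempty
  exact not_completeFilter_and_completelyPrimeFilter _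
    ⟨hmeet.completeFilter_setOf_mem x, hjoin.completelyPrimeFilter_setOf_mem x⟩

theorem stmt13 :
    (∃ (X : Type) (h : unitInterval → Set X), IsRep h ∧ MeetComplete h) ∧
    (∃ (X : Type) (h : unitInterval → Set X), IsRep h ∧ JoinComplete h) ∧
    ¬ ∃ (X : Type) (h : unitInterval → Set X), IsRep h ∧ MeetComplete h ∧ JoinComplete h :=
  ⟨⟨_, _, isRep_ioiRep, meetComplete_ioiRep⟩, ⟨_, _, isRep_iioRep, joinComplete_iioRep⟩,
    not_exists_isRep_meetComplete_joinComplete⟩
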